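/- Let G be a subgroup of the additive group ℚ containing ℤ, and for each prime p set G_p = {x ∈ G : pⁿ·x ∈ ℤ for some n ≥ 0}. Then the following are equivalent: (i) G is dual automorphism-invariant as a ℤ-module; (ii) the set of primes p for which G_p = ℤ is infinite; (iii) the Jacobson radical J(G) (the sum of all small subgroups of G, equivalently the intersection of all maximal subgroups) is zero. -/

import Mathlib

/-!
For a prime p, 1/p ∉ G exactly when G_p = ℤ, and then pG is a maximal subgroup of G, so it
contains every small subgroup. If there are infinitely many such p, a nonzero x ∈ G would be
divisible in G by such a p exceeding its numerator, which is impossible: J(G) = 0. When every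
small subgroup vanishes, dual automorphism-invariance holds trivially.

If there are only finitely many such p, their product a is divisible in G by every prime, which
makes ⟨a⟩ small and G/⟨a⟩ torsion. The automorphism of G/⟨a⟩ that is -1 on the 3-primary part and
1 on the prime-to-3 part does not lift: an endomorphism of G is multiplication by some r, and the
lift would force r ≡ -1 (mod 3) while r - 1 is divisible by every prime q ≠ 3.
-/

open LinearMap Submodule

/-- A submodule N of M is small (superfluous) in M:
N + K = M implies K = M for every submodule K. -/
def IsSmall {R : Type*} [Ring R] {M : Type*} [AddCommGroup M] [Module R M]
    (N : Submodule R M) : Prop :=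
  ∀ K : Submodule R M, N ⊔ K = ⊤ → K = ⊤

/-- M is a dual automorphism-invariant R-module: for any two small submodules
K₁, K₂ of M, every surjective homomorphism η : M/K₁ → M/K₂ whose kernel is
small in M/K₁ lifts to an endomorphism φ of M (i.e. π₂ ∘ φ = η ∘ π₁). -/
def IsDualAutoInv (R M : Type*) [Ring R] [AddCommGroup M] [Module R M] : Prop :=
  ∀ (K₁ K₂ : Submodule R M), IsSmall K₁ → IsSmall K₂ →
    ∀ η : (M ⧸ K₁) →ₗ[R] (M ⧸ K₂), Function.Surjective η →
      IsSmall (LinearMap.ker η) →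
      ∃ φ : M →ₗ[R] M, K₂.mkQ ∘ₗ φ = η ∘ₗ K₁.mkQ

section Small
variable {R M : Type*} [Ring R] [AddCommGroup M] [Module R M]

lemma isSmall_bot : IsSmall (⊥ : Submodule R M) := fun K hK => by simpa using hK

lemma IsSmall.le_of_isCoatom {N W : Submodule R M} (hN : IsSmall N) (hW : IsCoatom W) :
    N ≤ W := by
  by_contra h
  refine hW.1 (hN W (hW.2 _ (lt_of_le_of_ne le_sup_right fun heq => h ?_)))
  exact sup_eq_right.mp heq.symm

lemma isDualAutoInv_of_forall_isSmall_eq_bot (h : ∀ N : Submodule R M, IsSmall N → N = ⊥) :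
    IsDualAutoInv R M := by
  intro K₁ K₂ h₁ h₂ η _ _
  obtain rfl := h K₁ h₁
  obtain rfl := h K₂ h₂
  refine ⟨(quotEquivOfEqBot ⊥ rfl).toLinearMap ∘ₗ η ∘ₗ (⊥ : Submodule R M).mkQ, ?_⟩
  ext x
  obtain ⟨z, hz⟩ := Submodule.Quotient.mk_surjective _ (η (Submodule.Quotient.mk x))
  simp [← hz]

end Small

section PrimaryDecomposition
variable {M : Type*} [AddCommGroup M]

lemma eq_zero_of_coprime_nsmul {m n : ℕ} (h : m.Coprime n) {y : M} (hm : m • y = 0)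
    (hn : n • y = 0) : y = 0 :=
  AddMonoid.addOrderOf_eq_one_iff.mp <| Nat.dvd_one.mp <| h.gcd_eq_one ▸
    Nat.dvd_gcd (addOrderOf_dvd_of_nsmul_eq_zero hm) (addOrderOf_dvd_of_nsmul_eq_zero hn)

variable (M) (p : ℕ)

def primaryPart : Submodule ℤ M where
  carrier := {y | ∃ k : ℕ, p ^ k • y = 0}
  add_mem' := by
    rintro y z ⟨k, hk⟩ ⟨l, hl⟩
    refine ⟨k + l, ?_⟩
    rw [nsmul_add, pow_add, mul_nsmul, mul_nsmul', hk, hl, nsmul_zero, nsmul_zero, add_zero]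
  zero_mem' := ⟨0, smul_zero _⟩
  smul_mem' := by
    rintro c y ⟨k, hk⟩
    exact ⟨k, by rw [smul_comm, hk, smul_zero]⟩

def coprimePart : Submodule ℤ M where
  carrier := {y | ∃ m : ℕ, m.Coprime p ∧ m • y = 0}
  add_mem' := by
    rintro y z ⟨m, hm, hmy⟩ ⟨n, hn, hnz⟩
    refine ⟨m * n, hm.mul_left hn, ?_⟩
    rw [nsmul_add, mul_nsmul, mul_nsmul', hmy, hnz, nsmul_zero, nsmul_zero, add_zero]
  zero_mem' := ⟨1, Nat.coprime_one_left p, smul_zero _⟩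
  smul_mem' := by
    rintro c y ⟨m, hm, hmy⟩
    exact ⟨m, hm, by rw [smul_comm, hmy, smul_zero]⟩

variable {M p}

lemma isCompl_primaryPart_coprimePart (hp : p.Prime) (hM : IsAddTorsion M) :
    IsCompl (primaryPart M p) (coprimePart M p) := by
  refine ⟨disjoint_def.mpr ?_, codisjoint_iff.mpr (eq_top_iff.mpr ?_)⟩
  · rintro y ⟨k, hk⟩ ⟨m, hm, hmy⟩
    exact eq_zero_of_coprime_nsmul (hm.pow_right k) hmy hk
  · rintro y -
    obtain ⟨n, hn, hny⟩ := isOfFinAddOrder_iff_nsmul_eq_zero.mp (hM y)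
    obtain ⟨k, m, hpm, rfl⟩ := Nat.exists_eq_pow_mul_and_not_dvd hn.ne' p hp.ne_one
    have hmp : m.Coprime p := (hp.coprime_iff_not_dvd.mpr hpm).symm
    obtain ⟨u, v, huv⟩ := Nat.isCoprime_iff_coprime.mpr (hmp.pow_right k)
    have hsplit : y = u • (m • y) + v • ((p ^ k) • y) := by
      rw [← natCast_zsmul, ← natCast_zsmul, smul_smul, smul_smul, ← add_smul, huv, one_smul]
    rw [hsplit]
    refine add_mem_sup (smul_mem _ u ⟨k, ?_⟩) (smul_mem _ v ⟨m, hmp, ?_⟩)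
    · rwa [← mul_nsmul']
    · rwa [← mul_nsmul', mul_comm]

end PrimaryDecomposition

namespace Submodule
variable {R E : Type*} [Ring R] [AddCommGroup E] [Module R E] {p q : Submodule R E}

noncomputable def reflectionOfIsCompl (h : IsCompl p q) : E ≃ₗ[R] E :=
  (prodEquivOfIsCompl p q h).symm ≪≫ₗ (LinearEquiv.neg R).prodCongr (LinearEquiv.refl R q) ≪≫ₗ
    prodEquivOfIsCompl p q h

lemma reflectionOfIsCompl_apply_of_mem_left (h : IsCompl p q) {x : E} (hx : x ∈ p) :
    reflectionOfIsCompl h x = -x := by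
  simp [reflectionOfIsCompl, projection_apply_of_mem_left h hx,
    projection_apply_of_mem_right h.symm hx]

lemma reflectionOfIsCompl_apply_of_mem_right (h : IsCompl p q) {x : E} (hx : x ∈ q) :
    reflectionOfIsCompl h x = x := by
  simp [reflectionOfIsCompl, projection_apply_of_mem_right h hx,
    projection_apply_of_mem_left h.symm hx]

end Submodule

section DivisibleByEveryPrime
variable {M : Type*} [AddCommGroup M]

lemma eq_zero_of_forall_prime_one_sub_mul_zsmul_eq_zero {x : M}
    (h : ∀ q : ℕ, q.Prime → ∃ m : ℤ, (1 - q * m) • x = 0) : x = 0 := by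
  by_contra hx
  obtain ⟨q, hq, hqx⟩ := Nat.exists_prime_and_dvd (mt AddMonoid.addOrderOf_eq_one_iff.mp hx)
  obtain ⟨m, hm⟩ := h q hq
  have : (q : ℤ) ∣ 1 - q * m :=
    (Int.natCast_dvd_natCast.mpr hqx).trans (addOrderOf_dvd_iff_zsmul_eq_zero.mpr hm)
  exact hq.not_dvd_one (Int.natCast_dvd_natCast.mp ((dvd_sub_left (dvd_mul_right _ _)).mp this))

lemma isSmall_span_singleton_of_forall_prime {a : M}
    (h : ∀ q : ℕ, q.Prime → ∃ x : M, q • x = a) : IsSmall (span ℤ {a}) := by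
  intro K hK
  suffices K.mkQ a = 0 by
    rwa [mkQ_apply, Quotient.mk_eq_zero, ← span_singleton_le_iff_mem, ← sup_eq_right, hK,
      eq_comm] at this
  refine eq_zero_of_forall_prime_one_sub_mul_zsmul_eq_zero fun q hq => ?_
  obtain ⟨x, hx⟩ := h q hq
  rw [← natCast_zsmul] at hx
  obtain ⟨y, hy, z, hz, rfl⟩ := mem_sup.mp (hK ▸ mem_top : x ∈ span ℤ {a} ⊔ K)
  obtain ⟨m, rfl⟩ := mem_span_singleton.mp hy
  refine ⟨m, ?_⟩
  have : (1 - q * m) • a = (q : ℤ) • z := by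
    rw [sub_smul, one_smul, mul_smul]
    nth_rewrite 1 [← hx]
    rw [smul_add, add_sub_cancel_left]
  rw [← map_zsmul, mkQ_apply, Quotient.mk_eq_zero, this]
  exact K.smul_mem _ hz

end DivisibleByEveryPrime

lemma Rat.exists_isCoprime_mul_eq_mul {x y : ℚ} (hy : y ≠ 0) :
    ∃ d n : ℤ, d ≠ 0 ∧ IsCoprime d n ∧ d * x = n * y := by
  refine ⟨(x / y).den, (x / y).num, by simp, ?_, ?_⟩
  · refine Int.isCoprime_iff_gcd_eq_one.mpr ?_
    simpa [Int.gcd, Nat.coprime_comm] using (x / y).reduced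
  · rw [← Rat.mul_den_eq_num]
    field_simp
    rfl

section SubgroupOfRat
variable {G : AddSubgroup ℚ} {p : ℕ}

lemma one_div_mem_of_intCast_div_mem (hZ : ∀ m : ℤ, (m : ℚ) ∈ G) (hp : p.Prime) {m : ℤ}
    (hm : ¬ (p : ℤ) ∣ m) (h : (m : ℚ) / p ∈ G) : (1 : ℚ) / p ∈ G := by
  obtain ⟨u, v, huv⟩ := (Nat.prime_iff_prime_int.mp hp).coprime_iff_not_dvd.mpr hm
  have hp0 : (p : ℚ) ≠ 0 := by exact_mod_cast hp.ne_zero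
  have : (1 : ℚ) / p = u + v • ((m : ℚ) / p) := by
    rw [zsmul_eq_mul]
    field_simp
    have huvQ : (u : ℚ) * p + v * m = 1 := by exact_mod_cast huv
    linear_combination -huvQ
  rw [this]
  exact G.add_mem (hZ u) (G.zsmul_mem h v)

lemma forall_eq_intCast_iff_one_div_notMem (hZ : ∀ m : ℤ, (m : ℚ) ∈ G) (hp : p.Prime) :
    (∀ x : ℚ, x ∈ G → (∃ (n : ℕ) (m : ℤ), (p : ℚ) ^ n * x = m) → ∃ m : ℤ, x = m) ↔
      (1 : ℚ) / p ∉ G := by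
  have hp0 : (p : ℚ) ≠ 0 := by exact_mod_cast hp.ne_zero
  constructor
  · intro h hpG
    obtain ⟨m, hm⟩ := h _ hpG ⟨1, 1, by push_cast; field_simp⟩
    have : (p : ℤ) * m = 1 := by
      rw [← Int.cast_inj (α := ℚ)]
      push_cast
      rw [← hm]
      field_simp
    exact hp.ne_one (by simpa using Int.eq_one_of_mul_eq_one_right (by positivity) this)
  · rintro hpG x hx ⟨n, m, hnm⟩
    induction n generalizing x m with
    | zero => exact ⟨m, by simpa using hnm⟩
    | succ n ih =>
      obtain ⟨k, hk⟩ := ih (p * x) (by simpa using G.zsmul_mem hx p) m (by rw [← hnm]; ring)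
      by_cases hpk : (p : ℤ) ∣ k
      · obtain ⟨l, rfl⟩ := hpk
        exact ⟨l, mul_left_cancel₀ hp0 (by rw [hk]; push_cast; ring)⟩
      · refine absurd (one_div_mem_of_intCast_div_mem hZ hp hpk ?_) hpG
        rw [← hk]
        field_simp
        exact hx

lemma mem_range_lsmul_iff (hp : p ≠ 0) {g : G} :
    g ∈ range (lsmul ℤ G (p : ℤ)) ↔ (g : ℚ) / p ∈ G := by
  have hp0 : (p : ℚ) ≠ 0 := by exact_mod_cast hp
  constructor
  · rintro ⟨y, rfl⟩
    simp [hp0]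
  · intro h
    exact ⟨⟨_, h⟩, Subtype.ext (by simp; field_simp)⟩

lemma isCoatom_range_lsmul (hZ : ∀ m : ℤ, (m : ℚ) ∈ G) (hp : p.Prime) (hpG : (1 : ℚ) / p ∉ G) :
    IsCoatom (range (lsmul ℤ G (p : ℤ))) := by
  have hp' : Prime (p : ℤ) := Nat.prime_iff_prime_int.mp hp
  constructor
  · intro htop
    exact hpG ((mem_range_lsmul_iff hp.ne_zero).mp (htop ▸ mem_top : (⟨_, hZ 1⟩ : G) ∈ _))
  · intro W hlt
    obtain ⟨w, hwW, hw⟩ := SetLike.exists_of_lt hlt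
    have hw0 : (w : ℚ) ≠ 0 := fun h => hw ((mem_range_lsmul_iff hp.ne_zero).mpr (by simp [h]))
    refine eq_top_iff.mpr fun g _ => ?_
    obtain ⟨d, n, -, hdn, hrel⟩ := Rat.exists_isCoprime_mul_eq_mul (x := g) hw0
    have hrelG : d • g = n • w := Subtype.ext (by simpa [zsmul_eq_mul] using hrel)
    by_cases hpd : (p : ℤ) ∣ d
    · obtain ⟨e, rfl⟩ := hpd
      have hpn : ¬ (p : ℤ) ∣ n := fun hpn =>
        hp'.not_isUnit (hdn.isUnit_of_dvd' (dvd_mul_right _ _) hpn)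
      obtain ⟨u, v, huv⟩ := hp'.coprime_iff_not_dvd.mpr hpn
      refine absurd ⟨u • w + (v * e) • g, ?_⟩ hw
      calc (p : ℤ) • (u • w + (v * e) • g) = (u * p) • w + v • ((p * e) • g) := by
            rw [smul_add, smul_smul, smul_smul, smul_smul]; ring_nf
        _ = w := by rw [hrelG, smul_smul, ← add_smul, huv, one_smul]
    · obtain ⟨u, v, huv⟩ := hp'.coprime_iff_not_dvd.mpr hpd
      have hg : g = u • ((p : ℤ) • g) + v • (n • w) := by
        rw [← hrelG, smul_smul, smul_smul, ← add_smul, huv, one_smul]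
      rw [hg]
      exact W.add_mem (W.smul_mem u (hlt.le ⟨g, rfl⟩)) (W.smul_mem v (W.smul_mem n hwW))

lemma IsSmall.eq_bot_of_infinite (hZ : ∀ m : ℤ, (m : ℚ) ∈ G)
    (hinf : {p : ℕ | p.Prime ∧ (1 : ℚ) / p ∉ G}.Infinite) {N : Submodule ℤ G} (hN : IsSmall N) :
    N = ⊥ := by
  refine eq_bot_iff.mpr fun x hx => (mem_bot ℤ).mpr ?_
  by_contra hx0
  have hnum : (x : ℚ).num ≠ 0 := Rat.num_ne_zero.mpr fun h => hx0 (Subtype.ext h)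
  obtain ⟨p, ⟨hp, hpG⟩, hlt⟩ := hinf.exists_gt (x : ℚ).num.natAbs
  have hxp : (x : ℚ) / p ∈ G := (mem_range_lsmul_iff hp.ne_zero).mp
    (hN.le_of_isCoatom (isCoatom_range_lsmul hZ hp hpG) hx)
  have hnump : ((x : ℚ).num : ℚ) / p ∈ G := by
    have : ((x : ℚ).num : ℚ) / p = ((x : ℚ).den : ℤ) • ((x : ℚ) / p) := by
      rw [zsmul_eq_mul, ← Rat.mul_den_eq_num]
      push_cast
      ring
    exact this ▸ G.zsmul_mem hxp _
  have hpn : ¬ (p : ℤ) ∣ (x : ℚ).num := fun h => by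
    have := Nat.le_of_dvd (Int.natAbs_pos.mpr hnum) (Int.natCast_dvd.mp h)
    omega
  exact hpG (one_div_mem_of_intCast_div_mem hZ hp hpn hnump)

lemma exists_ne_zero_forall_prime_nsmul_eq (hZ : ∀ m : ℤ, (m : ℚ) ∈ G)
    (hfin : {p : ℕ | p.Prime ∧ (1 : ℚ) / p ∉ G}.Finite) :
    ∃ A : G, A ≠ 0 ∧ ∀ q : ℕ, q.Prime → ∃ x : G, q • x = A := by
  set a : ℕ := ∏ p ∈ hfin.toFinset, p
  have ha : a ≠ 0 := Finset.prod_ne_zero_iff.mpr fun p hp => (hfin.mem_toFinset.mp hp).1.ne_zero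
  have hdiv : ∀ q : ℕ, q.Prime → (a : ℚ) / q ∈ G := fun q hq => by
    by_cases hqG : (1 : ℚ) / q ∈ G
    · convert G.zsmul_mem hqG a using 1
      rw [zsmul_eq_mul, Int.cast_natCast, mul_one_div]
    · obtain ⟨c, hc⟩ := Finset.dvd_prod_of_mem _root_.id (hfin.mem_toFinset.mpr ⟨hq, hqG⟩)
      have hq0 : (q : ℚ) ≠ 0 := by exact_mod_cast hq.ne_zero
      convert hZ c using 1
      simp only [a, _root_.id] at hc ⊢
      rw [hc]
      push_cast
      field_simp
  refine ⟨⟨a, by simpa using hZ a⟩, fun h => ha (by simpa using congrArg Subtype.val h),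
    fun q hq => ⟨⟨_, hdiv q hq⟩, Subtype.ext ?_⟩⟩
  have hq0 : (q : ℚ) ≠ 0 := by exact_mod_cast hq.ne_zero
  simp only [AddSubgroup.coe_nsmul, nsmul_eq_mul]
  field_simp

lemma isAddTorsion_quotient_span_singleton {A : G} (hA : A ≠ 0) :
    IsAddTorsion (G ⧸ span ℤ {A}) := by
  intro y
  obtain ⟨x, rfl⟩ := Submodule.Quotient.mk_surjective _ y
  obtain ⟨d, n, hd, -, hrel⟩ :=
    Rat.exists_isCoprime_mul_eq_mul (x := x) fun h => hA (Subtype.ext h)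
  refine isOfFinAddOrder_iff_zsmul_eq_zero.mpr ⟨d, hd, ?_⟩
  rw [← Submodule.Quotient.mk_smul, Submodule.Quotient.mk_eq_zero]
  exact mem_span_singleton.mpr ⟨n, Subtype.ext (by simpa [zsmul_eq_mul] using hrel.symm)⟩

lemma coe_apply_eq_coe_apply_one_mul (h1 : (1 : ℚ) ∈ G) (φ : G →ₗ[ℤ] G) (x : G) :
    (φ x : ℚ) = φ ⟨1, h1⟩ * x := by
  obtain ⟨d, n, hd, -, hrel⟩ := Rat.exists_isCoprime_mul_eq_mul (x := x) one_ne_zero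
  have hrelG : d • x = n • (⟨1, h1⟩ : G) := Subtype.ext (by simpa [zsmul_eq_mul] using hrel)
  have := congrArg (fun y : G => (y : ℚ)) (congrArg φ hrelG)
  simp only [map_zsmul, AddSubgroup.coe_zsmul, zsmul_eq_mul] at this
  apply mul_left_cancel₀ (Int.cast_ne_zero.mpr hd)
  rw [this]
  linear_combination -(φ ⟨1, h1⟩ : ℚ) * hrel

lemma exists_coe_apply_one_sub_eq_mul_of_lift (h1 : (1 : ℚ) ∈ G) {A : G} (hA : A ≠ 0)
    {φ : G →ₗ[ℤ] G} {η : (G ⧸ span ℤ {A}) →ₗ[ℤ] G ⧸ span ℤ {A}}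
    (hφ : (span ℤ {A}).mkQ ∘ₗ φ = η ∘ₗ (span ℤ {A}).mkQ) {q : ℕ} {x : G} (hx : q • x = A)
    {s : ℤ} (hs : η ((span ℤ {A}).mkQ x) = s • (span ℤ {A}).mkQ x) :
    ∃ m : ℤ, (φ ⟨1, h1⟩ : ℚ) - s = q * m := by
  have hmem : φ x - s • x ∈ span ℤ {A} := by
    rw [← Submodule.Quotient.mk_eq_zero, ← mkQ_apply, map_sub, map_zsmul, ← hs]
    exact sub_eq_zero.mpr (LinearMap.congr_fun hφ x)
  obtain ⟨m, hm⟩ := mem_span_singleton.mp hmem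
  have hmQ := congrArg Subtype.val hm
  have hxQ := congrArg Subtype.val hx
  simp only [AddSubgroup.coe_zsmul, AddSubgroup.coe_sub, AddSubgroup.coe_nsmul, zsmul_eq_mul,
    nsmul_eq_mul, coe_apply_eq_coe_apply_one_mul h1 φ x] at hmQ hxQ
  have hx0 : (x : ℚ) ≠ 0 := fun h => hA (Subtype.ext (by simpa [h] using hxQ.symm))
  refine ⟨m, mul_right_cancel₀ hx0 ?_⟩
  linear_combination hmQ.symm - (m : ℚ) * hxQ

lemma not_isDualAutoInv_of_forall_prime_nsmul_eq (h1 : (1 : ℚ) ∈ G) {A : G} (hA : A ≠ 0)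
    (hdiv : ∀ q : ℕ, q.Prime → ∃ x : G, q • x = A) : ¬ IsDualAutoInv ℤ G := by
  intro hG
  set K := span ℤ {A}
  have hAK : K.mkQ A = 0 := (Submodule.Quotient.mk_eq_zero _).mpr (mem_span_singleton_self A)
  have hcompl := isCompl_primaryPart_coprimePart Nat.prime_three
    (isAddTorsion_quotient_span_singleton hA)
  have hK : IsSmall K := isSmall_span_singleton_of_forall_prime hdiv
  obtain ⟨φ, hφ⟩ := hG K K hK hK (reflectionOfIsCompl hcompl) (LinearEquiv.surjective _)
    (by rw [LinearEquiv.ker]; exact isSmall_bot)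
  obtain ⟨x₃, hx₃⟩ := hdiv 3 Nat.prime_three
  obtain ⟨m, hm⟩ := exists_coe_apply_one_sub_eq_mul_of_lift h1 hA hφ hx₃ (s := -1) (by
    rw [neg_one_smul]
    exact reflectionOfIsCompl_apply_of_mem_left hcompl ⟨1, by rw [pow_one, ← map_nsmul, hx₃, hAK]⟩)
  obtain ⟨q, hqge, hq⟩ := Nat.exists_infinite_primes ((3 * m - 2).natAbs + 4)
  obtain ⟨x, hx⟩ := hdiv q hq
  have hq3 : q.Coprime 3 := (Nat.coprime_primes hq Nat.prime_three).mpr (by omega)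
  obtain ⟨m', hm'⟩ := exists_coe_apply_one_sub_eq_mul_of_lift h1 hA hφ hx (s := 1) (by
    rw [one_smul]
    exact reflectionOfIsCompl_apply_of_mem_right hcompl ⟨q, hq3, by rw [← map_nsmul, hx, hAK]⟩)
  have hdvd : (3 * m - 2 : ℤ) = q * m' := by
    have : ((3 * m - 2 : ℤ) : ℚ) = q * m' := by push_cast; linear_combination hm' - hm
    exact_mod_cast this
  have := Int.eq_zero_of_dvd_of_natAbs_lt_natAbs ⟨m', hdvd⟩ (by simp; omega)
  omega

end SubgroupOfRat

/-- For a subgroup G of ℚ containing ℤ, the following are equivalent: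
(i) G is dual automorphism-invariant as a ℤ-module;
(ii) the set of primes p with G_p = {x ∈ G : pⁿ·x ∈ ℤ for some n} = ℤ is infinite;
(iii) the Jacobson radical of G (the sum of all small subgroups) is zero. -/
theorem subgroup_of_rat_dualAutoInv_tfae
    (G : AddSubgroup ℚ) (hZ : ∀ m : ℤ, (m : ℚ) ∈ G) :
    List.TFAE
      [IsDualAutoInv ℤ G,
       {p : ℕ | p.Prime ∧ ∀ x : ℚ, x ∈ G →
          (∃ (n : ℕ) (m : ℤ), (p : ℚ) ^ n * x = (m : ℚ)) → ∃ m : ℤ, x = (m : ℚ)}.Infinite,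
       sSup {N : Submodule ℤ G | IsSmall N} = ⊥] := by
  have hT : {p : ℕ | p.Prime ∧ ∀ x : ℚ, x ∈ G →
      (∃ (n : ℕ) (m : ℤ), (p : ℚ) ^ n * x = (m : ℚ)) → ∃ m : ℤ, x = (m : ℚ)} =
      {p : ℕ | p.Prime ∧ (1 : ℚ) / p ∉ G} :=
    Set.ext fun p => and_congr_right fun hp => forall_eq_intCast_iff_one_div_notMem hZ hp
  rw [hT]
  tfae_have 1 → 2 := fun hG => by
    by_contra hfin
    obtain ⟨A, hA, hdiv⟩ := exists_ne_zero_forall_prime_nsmul_eq hZ (Set.not_infinite.mp hfin)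
    exact not_isDualAutoInv_of_forall_prime_nsmul_eq (by simpa using hZ 1) hA hdiv hG
  tfae_have 2 → 3 := fun hinf => sSup_eq_bot.mpr fun N hN => hN.eq_bot_of_infinite hZ hinf
  tfae_have 3 → 1 := fun hJ =>
    isDualAutoInv_of_forall_isSmall_eq_bot fun N hN => le_bot_iff.mp (hJ ▸ le_sSup hN)
  tfae_finish
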